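/- Let {Y_j}_{j≥0} and {Z_j}_{j≥0} be sequences of positive numbers satisfying Y_{j+1} ≤ K b^j (Y_j^{1+δ} + Z_j^{1+κ} Y_j^δ) and Z_{j+1} ≤ K b^j (Y_j + Z_j^{1+κ}) for all j ≥ 0, where K, b > 1 and δ, κ > 0. If Y_0 + Z_0^{1+κ} ≤ (2K)^{−(1+κ)/σ} · b^{−(1+κ)/σ²}, where σ = min{κ, δ}, then Y_j → 0 and Z_j → 0 as j → ∞. -/

import Mathlib

/-!
Put `W j = Y j + Z j ^ (1 + κ)`. As long as `W j ≤ 1`, both `W j ^ (1 + δ)` and `W j ^ (1 + κ)`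
are at most `W j ^ (1 + σ)`, so `W (j + 1) ≤ C * B ^ j * W j ^ (1 + σ)` with `C = 2 K ^ (1 + κ)`
and `B = b ^ (1 + κ)`. For this single recursion, the smallness `C * W 0 ^ σ ≤ B ^ (-1 / σ)`
propagates by induction to `W j ≤ W 0 * (B ^ (-1 / σ)) ^ j`, which also keeps `W j ≤ 1`.
-/

open Filter Real Topology

section FastGeometric

variable {C B σ : ℝ} {W : ℕ → ℝ}

theorem le_mul_pow_of_fast_geometric (hσ : 0 < σ) (hC : 1 ≤ C) (hB : 1 ≤ B)
    (hW : ∀ j, 0 ≤ W j) (hrec : ∀ j, W j ≤ 1 → W (j + 1) ≤ C * B ^ j * W j ^ (1 + σ))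
    (hsmall : C * W 0 ^ σ ≤ B ^ (-1 / σ)) (j : ℕ) : W j ≤ W 0 * (B ^ (-1 / σ)) ^ j := by
  set r := B ^ (-1 / σ)
  have hr1 : r ≤ 1 :=
    rpow_le_one_of_one_le_of_nonpos hB (by rw [neg_div]; exact neg_nonpos.2 (by positivity))
  have hBr : B * r ^ σ = 1 := by
    rw [← rpow_mul (by linarith), div_mul_cancel₀ _ hσ.ne', rpow_neg_one,
      mul_inv_cancel₀ (by positivity)]
  have hW0 : W 0 ≤ 1 := by
    by_contra! h
    have : 1 < W 0 ^ σ := one_lt_rpow h hσ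
    nlinarith
  have hr0 : 0 ≤ r := by positivity
  have hW0r : ∀ j : ℕ, 0 ≤ W 0 * r ^ j := fun j => mul_nonneg (hW 0) (pow_nonneg hr0 j)
  induction j with
  | zero => simp
  | succ j ih =>
    have hWj : W j ≤ 1 := ih.trans (mul_le_one₀ hW0 (pow_nonneg hr0 j) (pow_le_one₀ hr0 hr1))
    calc W (j + 1) ≤ C * B ^ j * W j ^ (1 + σ) := hrec j hWj
      _ ≤ C * B ^ j * (W 0 * r ^ j) ^ (1 + σ) := by gcongr; exact hW j
      _ = C * W 0 ^ σ * (W 0 * r ^ j) * (B * r ^ σ) ^ j := by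
        rw [rpow_add' (hW0r j) (by positivity), rpow_one, mul_rpow (hW 0) (pow_nonneg hr0 j),
          ← rpow_pow_comm hr0]
        ring
      _ ≤ r * (W 0 * r ^ j) := by rw [hBr, one_pow, mul_one]; gcongr; exact hW0r j
      _ = W 0 * r ^ (j + 1) := by ring

theorem tendsto_zero_of_fast_geometric (hσ : 0 < σ) (hC : 1 ≤ C) (hB : 1 < B)
    (hW : ∀ j, 0 ≤ W j) (hrec : ∀ j, W j ≤ 1 → W (j + 1) ≤ C * B ^ j * W j ^ (1 + σ))
    (hinit : W 0 ≤ C ^ (-1 / σ) * B ^ (-1 / σ ^ 2)) : Tendsto W atTop (𝓝 0) := by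
  have hC0 : 0 < C := by linarith
  have hB0 : 0 < B := by linarith
  have hsmall : C * W 0 ^ σ ≤ B ^ (-1 / σ) := by
    have : W 0 ^ σ ≤ C⁻¹ * B ^ (-1 / σ) := by
      calc W 0 ^ σ ≤ (C ^ (-1 / σ) * B ^ (-1 / σ ^ 2)) ^ σ := by gcongr; exact hW 0
        _ = C⁻¹ * B ^ (-1 / σ) := by
          rw [mul_rpow (by positivity) (by positivity), ← rpow_mul hC0.le, ← rpow_mul hB0.le,
            ← rpow_neg_one C]
          congr 2 <;> field_simp
    calc C * W 0 ^ σ ≤ C * (C⁻¹ * B ^ (-1 / σ)) := by gcongr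
      _ = B ^ (-1 / σ) := by field_simp
  have hr0 : 0 ≤ B ^ (-1 / σ) := by positivity
  have hr1 : B ^ (-1 / σ) < 1 :=
    rpow_lt_one_of_one_lt_of_neg hB (by rw [neg_div]; exact neg_neg_of_pos (by positivity))
  refine squeeze_zero hW (le_mul_pow_of_fast_geometric hσ hC hB.le hW hrec hsmall) ?_
  simpa using (tendsto_pow_atTop_nhds_zero_of_lt_one hr0 hr1).const_mul (W 0)

end FastGeometric

theorem tendsto_zero_of_tendsto_rpow {ι : Type*} {l : Filter ι} {f : ι → ℝ} {p : ℝ} (hp : 0 < p)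
    (hf : ∀ i, 0 ≤ f i) (h : Tendsto (fun i => f i ^ p) l (𝓝 0)) : Tendsto f l (𝓝 0) := by
  have := h.rpow_const (p := p⁻¹) (Or.inr (inv_nonneg.2 hp.le))
  rw [zero_rpow (inv_ne_zero hp.ne')] at this
  exact this.congr fun i => rpow_rpow_inv (hf i) hp.ne'

theorem coupled_step_le {M y z y' z' δ κ σ : ℝ} (hM : 1 ≤ M) (hy : 0 < y) (hz : 0 ≤ z)
    (hz' : 0 ≤ z') (hκ : 0 ≤ κ) (hδ : 0 ≤ δ) (hσδ : σ ≤ δ) (hσκ : σ ≤ κ)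
    (hsum : y + z ^ (1 + κ) ≤ 1) (hy' : y' ≤ M * (y ^ (1 + δ) + z ^ (1 + κ) * y ^ δ))
    (hz'le : z' ≤ M * (y + z ^ (1 + κ))) :
    y' + z' ^ (1 + κ) ≤ 2 * M ^ (1 + κ) * (y + z ^ (1 + κ)) ^ (1 + σ) := by
  set w := y + z ^ (1 + κ)
  have hyw : y ≤ w := le_add_of_nonneg_right (by positivity)
  have hw : 0 < w := by positivity
  have hM' : M ≤ M ^ (1 + κ) := by
    simpa using rpow_le_rpow_of_exponent_le hM (by linarith : (1 : ℝ) ≤ 1 + κ)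
  have hw1 : ∀ {p q : ℝ}, q ≤ p → w ^ p ≤ w ^ q :=
    fun h => rpow_le_rpow_of_exponent_ge hw hsum h
  have hy'w : y' ≤ M * w ^ (1 + δ) :=
    calc y' ≤ M * (y ^ (1 + δ) + z ^ (1 + κ) * y ^ δ) := hy'
      _ = M * (y ^ δ * w) := by rw [rpow_add hy, rpow_one]; ring
      _ ≤ M * (w ^ δ * w) := by gcongr
      _ = M * w ^ (1 + δ) := by rw [rpow_add hw, rpow_one]; ring
  have hz'w : z' ^ (1 + κ) ≤ M ^ (1 + κ) * w ^ (1 + κ) := by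
    rw [← mul_rpow (by linarith) hw.le]; gcongr
  calc y' + z' ^ (1 + κ) ≤ M ^ (1 + κ) * w ^ (1 + σ) + M ^ (1 + κ) * w ^ (1 + σ) := by
        gcongr ?_ + ?_
        · exact hy'w.trans (mul_le_mul hM' (hw1 (by linarith)) (by positivity) (by positivity))
        · exact hz'w.trans (mul_le_mul_of_nonneg_left (hw1 (by linarith)) (by positivity))
    _ = 2 * M ^ (1 + κ) * w ^ (1 + σ) := by ring

theorem coupled_threshold_le {K b κ σ : ℝ} (hK : 0 < K) (hb : 0 < b) (hκ : 0 ≤ κ) (hσ : 0 < σ) :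
    (2 * K) ^ (-(1 + κ) / σ) * b ^ (-(1 + κ) / σ ^ 2) ≤
      (2 * K ^ (1 + κ)) ^ (-1 / σ) * (b ^ (1 + κ)) ^ (-1 / σ ^ 2) := by
  rw [mul_rpow zero_le_two hK.le, mul_rpow zero_le_two (by positivity), ← rpow_mul hK.le,
    ← rpow_mul hb.le, mul_div_assoc', mul_div_assoc', mul_neg_one]
  gcongr
  · exact one_le_two
  · linarith


/-- DiBenedetto's coupled fast-geometric-convergence lemma. -/
theorem stmt_4 (K b δ κ : ℝ) (hK : 1 < K) (hb : 1 < b) (hδ : 0 < δ) (hκ : 0 < κ)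
    (Y Z : ℕ → ℝ) (hY : ∀ j, 0 < Y j) (hZ : ∀ j, 0 < Z j)
    (hrecY : ∀ j, Y (j + 1) ≤ K * b ^ j * (Y j ^ (1 + δ) + Z j ^ (1 + κ) * Y j ^ δ))
    (hrecZ : ∀ j, Z (j + 1) ≤ K * b ^ j * (Y j + Z j ^ (1 + κ)))
    (hinit : Y 0 + Z 0 ^ (1 + κ) ≤
      (2 * K) ^ (-(1 + κ) / min κ δ) * b ^ (-(1 + κ) / (min κ δ) ^ 2)) :
    Filter.Tendsto Y Filter.atTop (nhds 0) ∧ Filter.Tendsto Z Filter.atTop (nhds 0) := by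
  set σ := min κ δ
  have hσ : 0 < σ := lt_min hκ hδ
  have hZκ : ∀ j, 0 ≤ Z j ^ (1 + κ) := fun j => rpow_nonneg (hZ j).le _
  have hW : Tendsto (fun j => Y j + Z j ^ (1 + κ)) atTop (𝓝 0) := by
    refine tendsto_zero_of_fast_geometric (C := 2 * K ^ (1 + κ)) (B := b ^ (1 + κ)) hσ
      ?_ (one_lt_rpow hb (by linarith)) (fun j => add_nonneg (hY j).le (hZκ j)) (fun j hj => ?_)
      (hinit.trans (coupled_threshold_le (by linarith) (by linarith) hκ.le hσ))
    · linarith [one_le_rpow hK.le (by linarith : (0 : ℝ) ≤ 1 + κ)]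
    · have hKb : 1 ≤ K * b ^ j := one_le_mul_of_one_le_of_one_le hK.le (one_le_pow₀ hb.le)
      refine (coupled_step_le hKb (hY j) (hZ j).le (hZ (j + 1)).le hκ.le hδ.le (min_le_right _ _)
        (min_le_left _ _) hj (hrecY j) (hrecZ j)).trans_eq ?_
      rw [mul_rpow (by linarith) (by positivity), ← rpow_pow_comm (by linarith)]
      ring
  exact ⟨squeeze_zero (fun j => (hY j).le) (fun j => le_add_of_nonneg_right (hZκ j)) hW,
    tendsto_zero_of_tendsto_rpow (by linarith) (fun j => (hZ j).le)
      (squeeze_zero hZκ (fun j => le_add_of_nonneg_left (hY j).le) hW)⟩
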